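/- Let H : ℝ → ℝ be continuous and coercive, and let Fa, Fb : ℝ → ℝ be continuous and non-increasing. Then the relaxation operator commutes with pointwise minimum and maximum: ℜ(min(Fa, Fb)) = min(ℜFa, ℜFb) and ℜ(max(Fa, Fb)) = max(ℜFa, ℜFb). -/

import Mathlib

open Set Filter

attribute [local instance] Classical.propDecidable

noncomputable section

/-- `H` is coercive: `H p → +∞` as `|p| → +∞`. -/
def Coercive (H : ℝ → ℝ) : Prop := Tendsto H (cocompact ℝ) atTop

/-- `F` is semi-coercive: `F p → +∞` as `p → -∞`. -/
def SemiCoercive (F : ℝ → ℝ) : Prop := Tendsto F atBot atTop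

/-- Sub-relaxation: `(R̲F)(p) = sup_{q ≥ p} min (F q) (H q)`. -/
def subR (H F : ℝ → ℝ) (p : ℝ) : ℝ := sSup ((fun q => min (F q) (H q)) '' Ici p)

/-- Super-relaxation: `(R̄F)(p) = inf_{q ≤ p} max (F q) (H q)`. -/
def supR (H F : ℝ → ℝ) (p : ℝ) : ℝ := sInf ((fun q => max (F q) (H q)) '' Iic p)

/-- Relaxation operator: `R̲F` where `F ≥ H`, `R̄F` where `F ≤ H`. -/
def relax (H F : ℝ → ℝ) (p : ℝ) : ℝ := if H p ≤ F p then subR H F p else supR H F p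

/-- `p` is a negative characteristic point of `F` relative to `H`. -/
def negChar (H F : ℝ → ℝ) (p : ℝ) : Prop :=
  H p = F p ∧ ∃ ε > 0, ∀ q ∈ Ioo (p - ε) p, H q < H p

/-- `p` is a positive characteristic point of `F` relative to `H`. -/
def posChar (H F : ℝ → ℝ) (p : ℝ) : Prop :=
  H p = F p ∧ ∃ ε > 0, ∀ q ∈ Ioo p (p + ε), H p < H q

/-- The upper point `p⁺ ∈ ℝ ∪ {+∞}` associated with `p` and `H`. -/
def upperPt (H : ℝ → ℝ) (p : ℝ) : EReal :=
  if ∀ ε > 0, ∃ q, p < q ∧ q < p + ε ∧ H q ≤ H p then (p : EReal)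
  else sSup ((fun q : ℝ => (q : EReal)) '' {q : ℝ | p < q ∧ ∀ r ∈ Ioo p q, H p < H r})

/-- The lower point `p⁻` associated with `p` and `H`. -/
def lowerPt (H : ℝ → ℝ) (p : ℝ) : ℝ :=
  if ∀ ε > 0, ∃ q, p - ε < q ∧ q < p ∧ H p ≤ H q then p
  else sInf {q : ℝ | q < p ∧ ∀ r ∈ Ioo q p, H r < H p}

/-- `p` is a positive limiter point of `F`. -/
def posLimiter (H F : ℝ → ℝ) (p : ℝ) : Prop :=
  (p : EReal) < upperPt H p ∧ F p ≤ H p ∧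
    ∀ q : ℝ, H q < H p → F q ≤ H q →
      {r : ℝ | lowerPt H q < r ∧ (r : EReal) < upperPt H q} ∩
        {r : ℝ | p < r ∧ (r : EReal) < upperPt H p} = ∅

/-- `p` is a negative limiter point of `F`. -/
def negLimiter (H F : ℝ → ℝ) (p : ℝ) : Prop :=
  lowerPt H p < p ∧ H p ≤ F p ∧
    ∀ q : ℝ, H q ≤ F q → H p < H q →
      {r : ℝ | lowerPt H q < r ∧ (r : EReal) < upperPt H q} ∩ Ioo (lowerPt H p) p = ∅

/-- The Godunov flux associated with `H`. -/
def godunov (H : ℝ → ℝ) (q p : ℝ) : ℝ :=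
  if p ≤ q then sSup (H '' Icc p q) else sInf (H '' Icc q p)

/-- The lower (set-valued) Godunov semi-flux `G̲(q,p)`, as a subset of the extended reals. -/
def subG (H : ℝ → ℝ) (q p : ℝ) : Set EReal :=
  if q < p then {⊥}
  else if q = p then Iic ((H p : ℝ) : EReal)
  else {((godunov H q p : ℝ) : EReal)}

/-- The upper (set-valued) Godunov semi-flux `Ḡ(q,p)`, as a subset of the extended reals. -/
def supG (H : ℝ → ℝ) (q p : ℝ) : Set EReal :=
  if q < p then {((godunov H q p : ℝ) : EReal)}
  else if q = p then Ici ((H p : ℝ) : EReal)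
  else {⊤}

/-!
For non-increasing `F`, `G` the sub-relaxation commutes with `max` (pointwise distributivity)
and with `min` (two near-maximisers merge at the smaller point), and the reflection
`p ↦ -p` turns these into the same facts for the super-relaxation. Since `R̲F p` and `R̄F p`
both lie on the same side of `H p` as `F p`, the branch chosen by `ℜ` for `min F G` or
`max F G` agrees with the branches chosen for `F` and `G` wherever it matters.
-/

section Relaxation

variable {H F G : ℝ → ℝ} {p q c : ℝ}

lemma antitone_neg_comp_neg (hF : Antitone F) : Antitone fun x => -F (-x) :=
  fun _ _ h => neg_le_neg (hF (neg_le_neg h))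

lemma bddAbove_image_min_Ici (hF : Antitone F) (p : ℝ) :
    BddAbove ((fun q => min (F q) (H q)) '' Ici p) :=
  ⟨F p, forall_mem_image.2 fun _ hq => (min_le_left _ _).trans (hF hq)⟩

lemma le_subR (hF : Antitone F) (hq : p ≤ q) : min (F q) (H q) ≤ subR H F p :=
  le_csSup (bddAbove_image_min_Ici hF p) (mem_image_of_mem _ hq)

lemma subR_le (h : ∀ q, p ≤ q → min (F q) (H q) ≤ c) : subR H F p ≤ c :=
  csSup_le (nonempty_Ici.image _) (forall_mem_image.2 h)

lemma exists_lt_of_lt_subR (h : c < subR H F p) : ∃ q, p ≤ q ∧ c < F q ∧ c < H q := by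
  obtain ⟨_, ⟨q, hq, rfl⟩, hc⟩ := exists_lt_of_lt_csSup (nonempty_Ici.image _) h
  exact ⟨q, hq, lt_min_iff.1 hc⟩

lemma subR_le_self (hF : Antitone F) : subR H F p ≤ F p :=
  subR_le fun _ hq => (min_le_left _ _).trans (hF hq)

lemma le_subR_of_le (hF : Antitone F) (h : H p ≤ F p) : H p ≤ subR H F p :=
  (min_eq_right h).ge.trans (le_subR hF le_rfl)

lemma subR_mono (hG : Antitone G) (hFG : F ≤ G) : subR H F p ≤ subR H G p :=
  subR_le fun q hq => (min_le_min_right _ (hFG q)).trans (le_subR hG hq)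

lemma subR_max (hF : Antitone F) (hG : Antitone G) :
    subR H (fun x => max (F x) (G x)) p = max (subR H F p) (subR H G p) := by
  have hFG := hF.max hG
  refine le_antisymm (subR_le fun q hq => ?_) <|
    max_le (subR_mono hFG fun _ => le_max_left _ _) (subR_mono hFG fun _ => le_max_right _ _)
  rw [min_max_distrib_right]
  exact max_le_max (le_subR hF hq) (le_subR hG hq)

/-- Near-maximisers `q` of `min F H` and `r` of `min G H` are merged at `min q r`,
where `F` and `G` are only larger. -/
lemma subR_min (hF : Antitone F) (hG : Antitone G) :
    subR H (fun x => min (F x) (G x)) p = min (subR H F p) (subR H G p) := by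
  refine le_antisymm (le_min (subR_mono hF fun _ => min_le_left _ _)
    (subR_mono hG fun _ => min_le_right _ _)) (le_of_forall_lt fun c hc => ?_)
  obtain ⟨q, hpq, hFq, hHq⟩ := exists_lt_of_lt_subR (hc.trans_le (min_le_left _ _))
  obtain ⟨r, hpr, hGr, hHr⟩ := exists_lt_of_lt_subR (hc.trans_le (min_le_right _ _))
  have hH : c < H (min q r) := by rcases min_choice q r with h | h <;> rw [h] <;> assumption
  have hF' : c < F (min q r) := hFq.trans_le (hF (min_le_left _ _))
  have hG' : c < G (min q r) := hGr.trans_le (hG (min_le_right _ _))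
  exact (lt_min (lt_min hF' hG') hH).trans_le (le_subR (hF.min hG) (le_min hpq hpr))

lemma supR_eq_neg_subR (H F : ℝ → ℝ) (p : ℝ) :
    supR H F p = -subR (fun x => -H (-x)) (fun x => -F (-x)) (-p) := by
  have hset : -((fun q => max (F q) (H q)) '' Iic p) =
      (fun x => min (-F (-x)) (-H (-x))) '' Ici (-p) := by
    ext x
    simp only [Set.mem_neg, mem_image, mem_Iic, mem_Ici, min_neg_neg]
    constructor
    · rintro ⟨q, hq, hx⟩
      exact ⟨-q, neg_le_neg hq, by simp [hx]⟩
    · rintro ⟨q, hq, rfl⟩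
      exact ⟨-q, neg_le.1 hq, by simp⟩
  rw [supR, subR, Real.sInf_def, hset]

lemma supR_le_of_le (hF : Antitone F) (h : F p ≤ H p) : supR H F p ≤ H p := by
  rw [supR_eq_neg_subR, neg_le]
  simpa using le_subR_of_le (H := fun x => -H (-x)) (p := -p) (antitone_neg_comp_neg hF)
    (by simpa using h)

lemma le_supR_of_le (hF : Antitone F) (h : H p ≤ F p) : H p ≤ supR H F p := by
  rw [supR_eq_neg_subR, le_neg]
  simpa using (subR_le_self (H := fun x => -H (-x)) (p := -p) (antitone_neg_comp_neg hF)).trans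
    (by simpa using h)

lemma supR_min (hF : Antitone F) (hG : Antitone G) :
    supR H (fun x => min (F x) (G x)) p = min (supR H F p) (supR H G p) := by
  simp only [supR_eq_neg_subR, ← max_neg_neg,
    subR_max (antitone_neg_comp_neg hF) (antitone_neg_comp_neg hG), min_neg_neg]

lemma supR_max (hF : Antitone F) (hG : Antitone G) :
    supR H (fun x => max (F x) (G x)) p = max (supR H F p) (supR H G p) := by
  simp only [supR_eq_neg_subR, ← min_neg_neg,
    subR_min (antitone_neg_comp_neg hF) (antitone_neg_comp_neg hG), max_neg_neg]

lemma relax_of_le (h : H p ≤ F p) : relax H F p = subR H F p := if_pos h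

lemma relax_of_lt (h : F p < H p) : relax H F p = supR H F p := if_neg h.not_ge

lemma min_supR_eq_min_relax (hF : Antitone F) (hG : Antitone G) (hFH : F p < H p) :
    min (supR H F p) (supR H G p) = min (relax H F p) (relax H G p) := by
  rw [relax_of_lt hFH]
  rcases lt_or_ge (G p) (H p) with hGH | hHG
  · rw [relax_of_lt hGH]
  · have hF' := supR_le_of_le hF hFH.le
    rw [min_eq_left (hF'.trans (le_supR_of_le hG hHG)),
      min_eq_left (hF'.trans (relax_of_le hHG ▸ le_subR_of_le hG hHG))]

lemma max_subR_eq_max_relax (hF : Antitone F) (hG : Antitone G) (hHF : H p ≤ F p) :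
    max (subR H F p) (subR H G p) = max (relax H F p) (relax H G p) := by
  rw [relax_of_le hHF]
  rcases le_or_gt (H p) (G p) with hHG | hGH
  · rw [relax_of_le hHG]
  · have hF' := le_subR_of_le hF hHF
    rw [max_eq_left ((subR_le_self hG).trans hGH.le |>.trans hF'),
      max_eq_left (relax_of_lt hGH ▸ (supR_le_of_le hG hGH.le).trans hF')]

lemma relax_min (hF : Antitone F) (hG : Antitone G) (p : ℝ) :
    relax H (fun x => min (F x) (G x)) p = min (relax H F p) (relax H G p) := by
  rcases le_or_gt (H p) (min (F p) (G p)) with hH | hH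
  · rw [relax_of_le hH, subR_min hF hG, relax_of_le (hH.trans (min_le_left _ _)),
      relax_of_le (hH.trans (min_le_right _ _))]
  rw [relax_of_lt hH, supR_min hF hG]
  rcases min_lt_iff.1 hH with hFH | hGH
  · exact min_supR_eq_min_relax hF hG hFH
  · rw [min_comm, min_supR_eq_min_relax hG hF hGH, min_comm]

lemma relax_max (hF : Antitone F) (hG : Antitone G) (p : ℝ) :
    relax H (fun x => max (F x) (G x)) p = max (relax H F p) (relax H G p) := by
  rcases le_or_gt (H p) (max (F p) (G p)) with hH | hH
  · rw [relax_of_le hH, subR_max hF hG]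
    rcases le_max_iff.1 hH with hHF | hHG
    · exact max_subR_eq_max_relax hF hG hHF
    · rw [max_comm, max_subR_eq_max_relax hG hF hHG, max_comm]
  rw [relax_of_lt hH, supR_max hF hG, relax_of_lt (lt_of_le_of_lt (le_max_left _ _) hH),
    relax_of_lt (lt_of_le_of_lt (le_max_right _ _) hH)]

end Relaxation

theorem relax_commutes_with_min_max_general (H Fa Fb : ℝ → ℝ)
    (hFaa : Antitone Fa)
    (hFba : Antitone Fb) :
    (relax H (fun p => min (Fa p) (Fb p)) = fun p => min (relax H Fa p) (relax H Fb p)) ∧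
    (relax H (fun p => max (Fa p) (Fb p)) = fun p => max (relax H Fa p) (relax H Fb p)) :=
  ⟨funext (relax_min hFaa hFba), funext (relax_max hFaa hFba)⟩

/-- Commutation of max/min with the relaxation operator `ℜ`. -/
theorem relax_commutes_with_min_max (H Fa Fb : ℝ → ℝ)
    (hH : Continuous H) (hHc : Coercive H)
    (hFac : Continuous Fa) (hFaa : Antitone Fa)
    (hFbc : Continuous Fb) (hFba : Antitone Fb) :
    (relax H (fun p => min (Fa p) (Fb p)) = fun p => min (relax H Fa p) (relax H Fb p)) ∧
    (relax H (fun p => max (Fa p) (Fb p)) = fun p => max (relax H Fa p) (relax H Fb p)) :=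
  relax_commutes_with_min_max_general H Fa Fb hFaa hFba
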